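/- There exists t* > 0 such that θ_L is strictly increasing on [t*, ∞) and θ_L(t) → ∞ as t → ∞; consequently, for every integer v with vπ > θ_L(t*) there is a unique t > t* with θ_L(t) = vπ. -/

import Mathlib

open Complex Filter Set Topology

/-- The factor `Δ_L(s) = i^k (2π)^(2s-k) Γ(k-s)/Γ(s)` from the functional equation. -/
noncomputable def DeltaL (k : ℕ) (s : ℂ) : ℂ :=
  Complex.I ^ k * (2 * Real.pi : ℂ) ^ (2 * s - (k : ℂ)) *
    Complex.Gamma ((k : ℂ) - s) / Complex.Gamma s

/-!
Differentiating `exp ∘ log Δ_L = Δ_L` gives `θ_L'(t) = Re ψ(k/2 + it) - log 2π` with `ψ = Γ'/Γ`,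
using `Re ψ(σ - it) = Re ψ(σ + it)`. The logarithms `logGammaSeq` of Euler's sequence
`GammaSeq s n → Γ(s)` telescope into a series converging locally uniformly on `Re s > 0`
(its terms are `O(1/n²)` on compacts), so their derivatives give
`ψ(s) = lim (log n - ∑_{m ≤ n} 1/(s + m))`. On the line `Re s = σ` the real part is
`lim (log n - ∑_{m ≤ n} (σ + m)/((σ + m)² + t²))`, which increases with `|t|`; once `t ≥ σ + M`
the first `M` terms have lost half of `∑_{m < M} 1/(σ + m)`, so it tends to `∞` as the harmonic
series does. Hence `θ_L' ≥ 1` on some `[t*, ∞)`, and the Gram points come from the intermediate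
value theorem.
-/

open scoped Nat

lemma Real.log_add_one_div_sub_inv_mem_Icc {x : ℝ} (hx : 0 < x) :
    Real.log ((x + 1) / x) - (x + 1)⁻¹ ∈ Icc 0 (x ^ 2)⁻¹ := by
  have hpos : 0 < (x + 1) / x := by positivity
  have hlow := Real.one_sub_inv_le_log_of_pos hpos
  have hup := Real.log_le_sub_one_of_pos hpos
  rw [inv_div, show 1 - x / (x + 1) = (x + 1)⁻¹ by field_simp; ring] at hlow
  rw [show (x + 1) / x - 1 = x⁻¹ by field_simp; ring] at hup
  refine ⟨by linarith, ?_⟩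
  have : x⁻¹ - (x + 1)⁻¹ ≤ (x ^ 2)⁻¹ := by
    rw [inv_sub_inv hx.ne' (by positivity), add_sub_cancel_left, one_div]
    exact inv_anti₀ (by positivity) (by nlinarith)
  linarith

lemma Real.tendsto_sum_range_inv_add_atTop {σ : ℝ} (hσ : 0 < σ) :
    Tendsto (fun M : ℕ => ∑ m ∈ Finset.range M, (σ + m)⁻¹) atTop atTop := by
  have hharmonic : Tendsto (fun M : ℕ => ∑ m ∈ Finset.range M, (σ + 1)⁻¹ * (1 / (m + 1 : ℝ)))
      atTop atTop := by
    simpa only [Finset.mul_sum] using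
      Real.tendsto_sum_range_one_div_nat_succ_atTop.const_mul_atTop (by positivity)
  refine tendsto_atTop_mono (fun M => Finset.sum_le_sum fun m _ => ?_) hharmonic
  rw [one_div, ← mul_inv]
  exact inv_anti₀ (by positivity) (by nlinarith [(m.cast_nonneg : (0 : ℝ) ≤ m)])

namespace Complex

noncomputable def logGammaSeq (s : ℂ) (n : ℕ) : ℂ :=
  s * log n + log n ! - ∑ m ∈ Finset.range (n + 1), log (s + m)

noncomputable def digammaSeq (s : ℂ) (n : ℕ) : ℂ :=
  log n - ∑ m ∈ Finset.range (n + 1), (s + m)⁻¹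

variable {s : ℂ} {n : ℕ}

lemma re_add_natCast_pos (hs : 0 < s.re) (m : ℕ) : 0 < (s + m).re := by
  simpa using add_pos_of_pos_of_nonneg hs m.cast_nonneg

lemma ne_neg_natCast_of_re_pos (hs : 0 < s.re) (m : ℕ) : s ≠ -m := by
  intro h
  simpa [h] using re_add_natCast_pos hs m

lemma exp_logGammaSeq (hs : 0 < s.re) (hn : n ≠ 0) : exp (logGammaSeq s n) = GammaSeq s n := by
  have hprod : exp (∑ m ∈ Finset.range (n + 1), log (s + m)) =
      ∏ m ∈ Finset.range (n + 1), (s + m) := by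
    rw [exp_sum]
    exact Finset.prod_congr rfl fun m _ => exp_log (ne_zero_of_re_pos (re_add_natCast_pos hs m))
  rw [logGammaSeq, exp_sub, exp_add, hprod, exp_log (by exact_mod_cast n.factorial_ne_zero),
    GammaSeq, cpow_def_of_ne_zero (by exact_mod_cast hn), mul_comm s]

lemma hasDerivAt_logGammaSeq (hs : 0 < s.re) (n : ℕ) :
    HasDerivAt (logGammaSeq · n) (digammaSeq s n) s := by
  have hlog : ∀ m : ℕ, HasDerivAt (fun z : ℂ => log (z + m)) (s + m)⁻¹ s := fun m => by
    simpa using ((hasDerivAt_id s).add_const (m : ℂ)).clog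
      (mem_slitPlane_iff.2 (Or.inl (re_add_natCast_pos hs m)))
  have h := (((hasDerivAt_id' s).mul_const (log n)).add_const (log n !)).fun_sub
    (HasDerivAt.fun_sum (u := Finset.range (n + 1)) fun m _ => hlog m)
  rw [one_mul] at h
  exact h

lemma logGammaSeq_succ_sub (hs : 0 < s.re) (hn : n ≠ 0) :
    logGammaSeq s (n + 1) - logGammaSeq s n =
      s * (Real.log ((n + 1) / n) : ℂ) - log (1 + s / (n + 1)) := by
  have hsplit : log (s + (n + 1 : ℕ)) = log (n + 1) + log (1 + s / (n + 1)) := by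
    have h : s + (n + 1 : ℕ) = ((n + 1 : ℝ) : ℂ) * (1 + s / (n + 1)) := by
      push_cast; field_simp; ring
    rw [h, log_ofReal_mul (by positivity), ofReal_log (by positivity)]
    · push_cast; rfl
    exact right_ne_zero_of_mul (h ▸ ne_zero_of_re_pos (re_add_natCast_pos hs _))
  have hfac : log ((n + 1)! : ℕ) = log (n + 1) + log n ! := by
    rw [Nat.factorial_succ, ← natCast_log, ← natCast_log, Nat.cast_mul, Real.log_mul (by positivity)
      (by positivity), ofReal_add, natCast_log, natCast_log]
    push_cast; rfl
  have hdiv : (Real.log ((n + 1) / n) : ℂ) = log (n + 1) - log n := by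
    rw [Real.log_div (by positivity) (by positivity), ofReal_sub, ofReal_log (by positivity),
      natCast_log]
    push_cast; rfl
  simp only [logGammaSeq, Finset.sum_range_succ _ (n + 1), hsplit, hfac, hdiv]
  push_cast
  ring

lemma norm_log_one_add_sub_self_le_sq {z : ℂ} (hz : ‖z‖ ≤ 1 / 2) :
    ‖log (1 + z) - z‖ ≤ ‖z‖ ^ 2 := by
  refine (norm_log_one_add_sub_self_le (by linarith)).trans ?_
  have : (1 - ‖z‖)⁻¹ ≤ 2 := by
    rw [inv_le_comm₀ (by linarith) (by norm_num)]; linarith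
  nlinarith [sq_nonneg ‖z‖, mul_le_mul_of_nonneg_left this (sq_nonneg ‖z‖)]

lemma norm_logGammaSeq_succ_sub_le (hs : 0 < s.re) (hn : n ≠ 0) (hsn : 2 * ‖s‖ ≤ n) :
    ‖logGammaSeq s (n + 1) - logGammaSeq s n‖ ≤ (‖s‖ + ‖s‖ ^ 2) / n ^ 2 := by
  have hn0 : (0 : ℝ) < n := by exact_mod_cast Nat.pos_of_ne_zero hn
  obtain ⟨hr0, hr1⟩ := Real.log_add_one_div_sub_inv_mem_Icc hn0
  set r := Real.log ((n + 1) / n) - ((n : ℝ) + 1)⁻¹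
  set z := s / (n + 1)
  have hz : ‖z‖ ≤ ‖s‖ / n := by
    rw [norm_div, show (n : ℂ) + 1 = ((n + 1 : ℝ) : ℂ) by push_cast; rfl, norm_real,
      Real.norm_of_nonneg (by positivity)]
    gcongr; linarith
  have hz2 : ‖z‖ ≤ 1 / 2 := hz.trans (by rw [div_le_iff₀ hn0]; linarith)
  have hdecomp : logGammaSeq s (n + 1) - logGammaSeq s n = s * (r : ℂ) - (log (1 + z) - z) := by
    rw [logGammaSeq_succ_sub hs hn]
    simp only [r, z]
    push_cast
    ring
  calc ‖logGammaSeq s (n + 1) - logGammaSeq s n‖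
      ≤ ‖s‖ * r + ‖z‖ ^ 2 := by
        rw [hdecomp]
        refine (norm_sub_le _ _).trans (add_le_add ?_ (norm_log_one_add_sub_self_le_sq hz2))
        rw [norm_mul, norm_real, Real.norm_of_nonneg hr0]
    _ ≤ ‖s‖ * (n ^ 2 : ℝ)⁻¹ + (‖s‖ / n) ^ 2 := by gcongr
    _ = (‖s‖ + ‖s‖ ^ 2) / n ^ 2 := by ring

lemma tendstoUniformlyOn_logGammaSeq {K : Set ℂ} (hK : K ⊆ {s | 0 < s.re}) (hKc : IsCompact K) :
    TendstoUniformlyOn (fun n s => logGammaSeq s n)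
      (fun s => logGammaSeq s 0 + ∑' m, (logGammaSeq s (m + 1) - logGammaSeq s m)) atTop K := by
  obtain ⟨R, hR⟩ := hKc.isBounded.exists_norm_le
  have hu : Summable fun m : ℕ => (R + R ^ 2) / (m : ℝ) ^ 2 := by
    simpa only [div_eq_mul_inv] using (Real.summable_nat_pow_inv.2 one_lt_two).mul_left (R + R ^ 2)
  have hbound : ∀ᶠ m : ℕ in atTop, ∀ s ∈ K,
      ‖logGammaSeq s (m + 1) - logGammaSeq s m‖ ≤ (R + R ^ 2) / (m : ℝ) ^ 2 := by
    filter_upwards [eventually_ge_atTop 1, eventually_ge_atTop ⌈2 * R⌉₊] with m hm1 hmR s hs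
    have hsR := hR s hs
    refine (norm_logGammaSeq_succ_sub_le (hK hs) (by omega)
      (by linarith [Nat.ceil_le.1 hmR])).trans ?_
    gcongr
  have hsum := tendstoUniformlyOn_tsum_nat_eventually hu hbound
  rw [Metric.tendstoUniformlyOn_iff] at hsum ⊢
  intro ε hε
  filter_upwards [hsum ε hε] with n hn s hs
  have htelescope : logGammaSeq s n =
      logGammaSeq s 0 + ∑ m ∈ Finset.range n, (logGammaSeq s (m + 1) - logGammaSeq s m) := by
    rw [Finset.sum_range_sub (logGammaSeq s)]; ring
  rw [htelescope, dist_add_left]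
  exact hn s hs

lemma tendsto_digammaSeq (hs : 0 < s.re) : Tendsto (digammaSeq s) atTop (𝓝 (digamma s)) := by
  set U : Set ℂ := {z | 0 < z.re}
  have hU : IsOpen U := isOpen_lt continuous_const continuous_re
  set L : ℂ → ℂ := fun z => logGammaSeq z 0 + ∑' m, (logGammaSeq z (m + 1) - logGammaSeq z m)
  have hL : TendstoLocallyUniformlyOn (fun n z => logGammaSeq z n) L atTop U :=
    (tendstoLocallyUniformlyOn_iff_forall_isCompact hU).2 fun K hK hKc =>
      tendstoUniformlyOn_logGammaSeq hK hKc
  have hdiff : ∀ᶠ n in atTop, DifferentiableOn ℂ (logGammaSeq · n) U :=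
    Eventually.of_forall fun n z hz =>
      (hasDerivAt_logGammaSeq hz n).differentiableAt.differentiableWithinAt
  have hexp : ∀ z ∈ U, exp (L z) = Gamma z := fun z hz =>
    tendsto_nhds_unique ((continuous_exp.tendsto _).comp (hL.tendsto_at hz))
      ((GammaSeq_tendsto_Gamma z).congr' (by
        filter_upwards [eventually_ne_atTop 0] with n hn
        exact (exp_logGammaSeq hz hn).symm))
  have hLs : HasDerivAt L (deriv L s) s :=
    ((hL.differentiableOn hdiff hU) s hs).differentiableAt (hU.mem_nhds hs) |>.hasDerivAt
  have hGamma : HasDerivAt Gamma (exp (L s) * deriv L s) s :=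
    hLs.cexp.congr_of_eventuallyEq (eventually_of_mem (hU.mem_nhds hs) fun z hz => (hexp z hz).symm)
  have hlim : Tendsto (digammaSeq s) atTop (𝓝 (deriv L s)) := by
    refine ((hL.deriv hdiff hU).tendsto_at hs).congr fun n => ?_
    exact (hasDerivAt_logGammaSeq hs n).deriv
  rwa [digamma_def, logDeriv_apply, hGamma.deriv, ← hexp s hs,
    mul_div_cancel_left₀ _ (exp_ne_zero _)]

section VerticalLine

variable {σ : ℝ}

lemma re_digammaSeq (t : ℝ) (n : ℕ) : (digammaSeq (σ + t * I) n).re =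
    Real.log n - ∑ m ∈ Finset.range (n + 1), (σ + m) / ((σ + m) ^ 2 + t ^ 2) := by
  simp only [digammaSeq, sub_re, re_sum, ← natCast_log, ofReal_re, inv_re, normSq_apply]
  congr 1
  refine Finset.sum_congr rfl fun m _ => ?_
  simp only [add_re, add_im, ofReal_re, ofReal_im, mul_re, mul_im, I_re, I_im, natCast_re,
    natCast_im]
  ring_nf

lemma sum_le_re_digamma_sub (hσ : 0 < σ) {t₁ t₂ : ℝ} (ht : t₁ ^ 2 ≤ t₂ ^ 2) (M : ℕ) :
    ∑ m ∈ Finset.range M, ((σ + m) / ((σ + m) ^ 2 + t₁ ^ 2) - (σ + m) / ((σ + m) ^ 2 + t₂ ^ 2))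
      ≤ (digamma (σ + t₂ * I)).re - (digamma (σ + t₁ * I)).re := by
  have hre : ∀ t : ℝ, 0 < ((σ : ℂ) + t * I).re := fun t => by simpa using hσ
  have hlim := ((continuous_re.tendsto _).comp (tendsto_digammaSeq (hre t₂))).sub
    ((continuous_re.tendsto _).comp (tendsto_digammaSeq (hre t₁)))
  refine ge_of_tendsto hlim ?_
  filter_upwards [eventually_ge_atTop M] with n hn
  simp only [Function.comp_apply, re_digammaSeq, sub_sub_sub_cancel_left, ← Finset.sum_sub_distrib]
  refine Finset.sum_le_sum_of_subset_of_nonneg (Finset.range_subset_range.2 (by omega)) ?_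
  intro m _ _
  exact sub_nonneg.2 (div_le_div_of_nonneg_left (by positivity) (by positivity) (by linarith))

lemma re_digamma_le_of_sq_le (hσ : 0 < σ) {t₁ t₂ : ℝ} (ht : t₁ ^ 2 ≤ t₂ ^ 2) :
    (digamma (σ + t₁ * I)).re ≤ (digamma (σ + t₂ * I)).re := by
  simpa using sum_le_re_digamma_sub hσ ht 0

lemma re_digamma_neg (hσ : 0 < σ) (t : ℝ) :
    (digamma (σ + (-t : ℝ) * I)).re = (digamma (σ + t * I)).re :=
  le_antisymm (re_digamma_le_of_sq_le hσ (neg_sq t).le) (re_digamma_le_of_sq_le hσ (neg_sq t).ge)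

lemma tendsto_re_digamma_atTop (hσ : 0 < σ) :
    Tendsto (fun t : ℝ => (digamma (σ + t * I)).re) atTop atTop := by
  refine tendsto_atTop.2 fun b => ?_
  obtain ⟨M, hM⟩ := ((Real.tendsto_sum_range_inv_add_atTop hσ).eventually_ge_atTop
    (2 * (b - (digamma σ).re))).exists
  filter_upwards [eventually_ge_atTop (σ + M)] with t ht
  have hterm : ∀ m ∈ Finset.range M, (σ + m)⁻¹ / 2 ≤
      (σ + m) / ((σ + m) ^ 2 + (0 : ℝ) ^ 2) - (σ + m) / ((σ + m) ^ 2 + t ^ 2) := by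
    intro m hm
    have hx : 0 < σ + m := by positivity
    have hxt : σ + m ≤ t := by
      linarith [(Nat.cast_le.2 (Finset.mem_range.1 hm).le : (m : ℝ) ≤ M)]
    have : (σ + m) / ((σ + m) ^ 2 + t ^ 2) ≤ (σ + m)⁻¹ / 2 := by
      rw [div_le_iff₀ (by positivity)]
      field_simp
      nlinarith
    have h0 : (σ + m) / ((σ + m) ^ 2 + (0 : ℝ) ^ 2) = (σ + m)⁻¹ := by field_simp; ring
    rw [h0]
    linarith
  have h := (Finset.sum_le_sum hterm).trans (sum_le_re_digamma_sub hσ (t₁ := 0) (t₂ := t)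
    (by nlinarith) M)
  rw [← Finset.sum_div] at h
  simp only [ofReal_zero, zero_mul, add_zero] at h
  linarith

end VerticalLine

lemma hasDerivAt_of_exp_eventuallyEq {f g : ℂ → ℂ} {f' : ℂ} (hg : DifferentiableAt ℂ g s)
    (hfg : ∀ᶠ z in 𝓝 s, exp (g z) = f z) (hf : HasDerivAt f f' s) :
    HasDerivAt g (f' / f s) s := by
  have hexp := hg.hasDerivAt.cexp.congr_of_eventuallyEq (hfg.mono fun _ h => h.symm)
  rw [hf.unique hexp, ← hfg.self_of_nhds, mul_div_cancel_left₀ _ (exp_ne_zero _)]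
  exact hg.hasDerivAt

end Complex

lemma hasDerivAt_DeltaL (k : ℕ) {s : ℂ} (hs : ∀ m : ℕ, s ≠ -m) (hks : ∀ m : ℕ, (k : ℂ) - s ≠ -m) :
    HasDerivAt (DeltaL k)
      (DeltaL k s * (2 * log (2 * Real.pi) - digamma (k - s) - digamma s)) s := by
  have hpi : (2 * Real.pi : ℂ) ≠ 0 := by exact_mod_cast Real.two_pi_pos.ne'
  have hpow : HasDerivAt (fun z : ℂ => (2 * Real.pi : ℂ) ^ (2 * z - k))
      ((2 * Real.pi : ℂ) ^ (2 * s - k) * log (2 * Real.pi) * 2) s := by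
    simpa using (((hasDerivAt_id' s).const_mul 2).sub_const (k : ℂ)).const_cpow (Or.inl hpi)
  have hΓks : HasDerivAt (fun z : ℂ => Gamma (k - z)) (deriv Gamma (k - s) * -1) s :=
    (differentiableAt_Gamma _ hks).hasDerivAt.comp s ((hasDerivAt_id' s).const_sub _)
  have h := ((hpow.const_mul (I ^ k)).mul hΓks).div (differentiableAt_Gamma s hs).hasDerivAt
    (Gamma_ne_zero hs)
  refine h.congr_deriv ?_
  simp only [DeltaL, digamma_def, logDeriv_apply, Pi.mul_apply]
  field_simp [Gamma_ne_zero hs, Gamma_ne_zero hks]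
  ring

lemma hasDerivAt_thetaL {k : ℕ} (hk : 0 < k) {logΔ : ℂ → ℂ}
    (hlog_diff : ∀ s : ℂ, 0 < s.re → s.re < (k : ℝ) → DifferentiableAt ℂ logΔ s)
    (hlog_exp : ∀ s : ℂ, 0 < s.re → s.re < (k : ℝ) → exp (logΔ s) = DeltaL k s)
    {θ : ℝ → ℝ} (hθ : ∀ t : ℝ, (θ t : ℂ) = I / 2 * logΔ ((k : ℂ) / 2 + t * I)) (t : ℝ) :
    HasDerivAt θ ((digamma ((k / 2 : ℝ) + t * I)).re - Real.log (2 * Real.pi)) t := by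
  set σ : ℝ := (k : ℝ) / 2
  have hσ : 0 < σ := by positivity
  set s : ℂ := σ + t * I
  have hs : (k : ℂ) / 2 + t * I = s := by simp only [s, σ]; push_cast; ring
  have hks : (k : ℂ) - s = σ + (-t : ℝ) * I := by simp only [s, σ]; push_cast; ring
  have hs_re : s.re = σ := by simp [s]
  have hks_re : ((k : ℂ) - s).re = σ := by rw [hks]; simp
  have hstrip : IsOpen {z : ℂ | 0 < z.re ∧ z.re < k} :=
    (isOpen_lt continuous_const continuous_re).inter (isOpen_lt continuous_re continuous_const)
  have hs_mem : 0 < s.re ∧ s.re < k := by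
    rw [hs_re]; exact ⟨hσ, by simp only [σ]; linarith [(Nat.cast_pos.2 hk : (0 : ℝ) < k)]⟩
  have hlogΔ := hasDerivAt_of_exp_eventuallyEq (hlog_diff s hs_mem.1 hs_mem.2)
    (eventually_of_mem (hstrip.mem_nhds hs_mem) fun z hz => hlog_exp z hz.1 hz.2)
    (hasDerivAt_DeltaL k (ne_neg_natCast_of_re_pos hs_mem.1)
      (ne_neg_natCast_of_re_pos (hks_re ▸ hσ)))
  rw [mul_div_cancel_left₀ _ (hlog_exp s hs_mem.1 hs_mem.2 ▸ exp_ne_zero _)] at hlogΔ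
  have hline : HasDerivAt (fun z : ℂ => (k : ℂ) / 2 + z * I) I (t : ℂ) := by
    simpa using ((hasDerivAt_id' (t : ℂ)).mul_const I).const_add ((k : ℂ) / 2)
  have hcomp := ((hs ▸ hlogΔ).comp (t : ℂ) hline).const_mul (I / 2) |>.real_of_complex
  have hθ_eq : θ = fun x : ℝ => (I / 2 * logΔ ((k : ℂ) / 2 + x * I)).re := by
    funext x; rw [← hθ x, ofReal_re]
  rw [hθ_eq]
  refine hcomp.congr_deriv ?_
  have hre : ∀ w : ℂ, (I / 2 * (w * I)).re = -w.re / 2 := fun w => by simp; ring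
  rw [hre, hs, sub_re, sub_re, hks, re_digamma_neg hσ, mul_re, ← ofReal_ofNat, ← ofReal_mul,
    ← ofReal_log (by positivity)]
  simp
  ring

lemma existsUnique_gt_eq_of_strictMonoOn_Ici {f : ℝ → ℝ} {a y : ℝ} (hf : Continuous f)
    (hmono : StrictMonoOn f (Ici a)) (htop : Tendsto f atTop atTop) (hy : f a < y) :
    ∃! x, a < x ∧ f x = y := by
  obtain ⟨b, hby, hab⟩ := ((htop.eventually_ge_atTop y).and (eventually_ge_atTop a)).exists
  obtain ⟨x, hx, hfx⟩ := intermediate_value_Icc hab hf.continuousOn ⟨hy.le, hby⟩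
  have hax : a < x := hx.1.lt_of_ne (by rintro rfl; exact hy.ne hfx)
  refine ⟨x, ⟨hax, hfx⟩, fun x' hx' => ?_⟩
  exact hmono.injOn (mem_Ici.2 hx'.1.le) (mem_Ici.2 hax.le) (hx'.2.trans hfx.symm)

lemma tendsto_atTop_of_le_deriv {f : ℝ → ℝ} {a c : ℝ} (hc : 0 < c) (hf : Differentiable ℝ f)
    (hf' : ∀ x, a ≤ x → c ≤ deriv f x) : Tendsto f atTop atTop := by
  have hlin : ∀ x, a ≤ x → f a + c * (x - a) ≤ f x := fun x hx => by
    have := (convex_Ici a).mul_sub_le_image_sub_of_le_deriv hf.continuous.continuousOn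
      hf.differentiableOn (fun y hy => hf' y (interior_subset hy)) a self_mem_Ici x hx hx
    linarith
  refine tendsto_atTop_mono' atTop ((eventually_ge_atTop a).mono hlin) ?_
  exact tendsto_atTop_add_const_left _ _
    ((tendsto_id.atTop_add tendsto_const_nhds).const_mul_atTop hc)

theorem thetaL_eventually_strictMono_and_gram_points_exist_general
    (k : ℕ) (hk : 12 ≤ k)
    (logΔ : ℂ → ℂ)
    (hlog_diff : ∀ s : ℂ, 0 < s.re → s.re < (k : ℝ) → DifferentiableAt ℂ logΔ s)
    (hlog_exp : ∀ s : ℂ, 0 < s.re → s.re < (k : ℝ) → Complex.exp (logΔ s) = DeltaL k s)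
    (θ : ℝ → ℝ)
    (hθ : ∀ t : ℝ, (θ t : ℂ) = Complex.I / 2 * logΔ ((k : ℂ) / 2 + t * Complex.I))
    :
    ∃ tstar : ℝ, 0 < tstar ∧ StrictMonoOn θ (Set.Ici tstar) ∧
      Filter.Tendsto θ Filter.atTop Filter.atTop ∧
      ∀ v : ℤ, θ tstar < (v : ℝ) * Real.pi →
        ∃! t : ℝ, tstar < t ∧ θ t = (v : ℝ) * Real.pi := by
  have hσ : 0 < (k : ℝ) / 2 := by positivity
  have hder := hasDerivAt_thetaL (by omega) hlog_diff hlog_exp hθ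
  have hθdiff : Differentiable ℝ θ := fun t => (hder t).differentiableAt
  obtain ⟨t₀, ht₀ψ, ht₀⟩ := (((tendsto_re_digamma_atTop hσ).eventually_ge_atTop
    (Real.log (2 * Real.pi) + 1)).and (eventually_ge_atTop 1)).exists
  have hθ' : ∀ t, t₀ ≤ t → 1 ≤ deriv θ t := fun t ht => by
    rw [(hder t).deriv]
    linarith [re_digamma_le_of_sq_le hσ (pow_le_pow_left₀ (by linarith) ht 2)]
  have hmono : StrictMonoOn θ (Ici t₀) :=
    strictMonoOn_of_deriv_pos (convex_Ici t₀) hθdiff.continuous.continuousOn fun t ht =>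
      one_pos.trans_le (hθ' t (interior_subset ht))
  have htop := tendsto_atTop_of_le_deriv one_pos hθdiff hθ'
  exact ⟨t₀, by linarith, hmono, htop, fun v hv =>
    existsUnique_gt_eq_of_strictMonoOn_Ici hθdiff.continuous hmono htop hv⟩

/-- `θ_L` is eventually strictly increasing and tends to infinity; consequently the Gram
points are well defined. -/
theorem thetaL_eventually_strictMono_and_gram_points_exist
    (k : ℕ) (hk : 12 ≤ k) (hkeven : Even k)
    (logΔ : ℂ → ℂ)
    (hlog_diff : ∀ s : ℂ, 0 < s.re → s.re < (k : ℝ) → DifferentiableAt ℂ logΔ s)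
    (hlog_exp : ∀ s : ℂ, 0 < s.re → s.re < (k : ℝ) → Complex.exp (logΔ s) = DeltaL k s)
    (hΔ_ne : ∀ s : ℂ, 0 < s.re → s.re < (k : ℝ) → DeltaL k s ≠ 0)
    (hlog_val : logΔ ((k : ℂ) / 2) = (k : ℂ) * Real.pi * Complex.I / 2)
    (θ : ℝ → ℝ)
    (hθ : ∀ t : ℝ, (θ t : ℂ) = Complex.I / 2 * logΔ ((k : ℂ) / 2 + t * Complex.I))
    :
    ∃ tstar : ℝ, 0 < tstar ∧ StrictMonoOn θ (Set.Ici tstar) ∧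
      Filter.Tendsto θ Filter.atTop Filter.atTop ∧
      ∀ v : ℤ, θ tstar < (v : ℝ) * Real.pi →
        ∃! t : ℝ, tstar < t ∧ θ t = (v : ℝ) * Real.pi :=
  thetaL_eventually_strictMono_and_gram_points_exist_general k hk logΔ hlog_diff hlog_exp θ hθ
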